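/- Let f ∈ F_L and for δ ∈ (0, √(3/L)] let X_δ be the solution of the smoothed ODE Ẍ_δ + (3/max(δ,t))Ẋ_δ + ∇f(X_δ) = 0 with X_δ(0) = x₀, Ẋ_δ(0) = 0. Then for every t ∈ [0, √(6/L)]: ‖Ẋ_δ(t)‖ ≤ 5√(6/L)·‖∇f(x₀)‖ and ‖X_δ(t)‖ ≤ ‖x₀‖ + 30‖∇f(x₀)‖/L; in particular, the family {X_δ restricted to [0, √(6/L)] : 0 < δ ≤ √(3/L)} is uniformly bounded and (uniformly Lipschitz, hence) equicontinuous. -/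

import Mathlib

/-!
The damping only helps: after multiplying by the increasing integrating factor
`exp (∫₀ᵗ 3 / max δ s ds)`, one gets `‖Ẋ t‖ ≤ ∫₀ᵗ ‖∇f (X s)‖` whatever `δ` is. Combined with
`‖X t - x₀‖ ≤ ∫₀ᵗ ‖Ẋ‖` and the Lipschitz bound on `∇f`, Grönwall's inequality gives
`√L ‖X t - x₀‖ + ‖Ẋ t‖ ≤ ‖∇f x₀‖ (exp (√L t) - 1) / √L`, which is at most `12 ‖∇f x₀‖ / √L`
on `[0, √(6/L)]` because `exp √6 ≤ 13`. The resulting uniform velocity bound makes the family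
uniformly Lipschitz, hence equicontinuous.
-/

open Set Filter Topology

noncomputable section

abbrev E (n : ℕ) := EuclideanSpace ℝ (Fin n)

def MemFL (n : ℕ) (L : ℝ) (f : E n → ℝ) : Prop :=
  ConvexOn ℝ Set.univ f ∧ ContDiff ℝ 1 f ∧
    ∀ x y, ‖gradient f x - gradient f y‖ ≤ L * ‖x - y‖

/-- The solution `X` (with velocity `V = Ẋ`) of the smoothed ODE
`Ẍ + (3/max(δ,t))Ẋ + ∇f(X) = 0`, `X(0) = x₀`, `Ẋ(0) = 0`, on `[0,∞)`. -/
def SmoothedSol (n : ℕ) (f : E n → ℝ) (δ : ℝ) (x0 : E n) (X V : ℝ → E n) : Prop :=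
  X 0 = x0 ∧ V 0 = 0 ∧
  (∀ t ∈ Set.Ici (0:ℝ), HasDerivWithinAt X (V t) (Set.Ici 0) t) ∧
  (∀ t ∈ Set.Ici (0:ℝ),
    HasDerivWithinAt V (-(3 / max δ t) • V t - gradient f (X t)) (Set.Ici 0) t)

open intervalIntegral

section

variable {F : Type*} [NormedAddCommGroup F] [NormedSpace ℝ F] [CompleteSpace F]

theorem hasDerivWithinAt_integral_of_continuousOn_Icc {v : ℝ → F} {a b t : ℝ}
    (hv : ContinuousOn v (Icc a b)) (ht : t ∈ Icc a b) :
    HasDerivWithinAt (fun u => ∫ s in a..u, v s) (v t) (Icc a b) t :=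
  haveI : Fact (t ∈ Icc a b) := ⟨ht⟩
  integral_hasDerivWithinAt_right
    ((hv.mono (Icc_subset_Icc_right ht.2)).intervalIntegrable_of_Icc ht.1)
    (hv.stronglyMeasurableAtFilter_nhdsWithin measurableSet_Icc t) (hv t ht)

/-- `y = K ∫ v + ∫ g` satisfies `y' = K v + g ≤ K y + c`, so Grönwall's inequality applies. -/
theorem mul_integral_add_integral_le_gronwallBound {v g : ℝ → ℝ} {a b c K : ℝ} (hK : 0 ≤ K)
    (hab : a ≤ b) (hv : ContinuousOn v (Icc a b)) (hg : ContinuousOn g (Icc a b))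
    (hvg : ∀ t ∈ Icc a b, v t ≤ ∫ s in a..t, g s)
    (hgv : ∀ t ∈ Icc a b, g t ≤ c + K ^ 2 * ∫ s in a..t, v s) :
    K * (∫ s in a..b, v s) + ∫ s in a..b, g s ≤ gronwallBound 0 K c (b - a) := by
  set y : ℝ → ℝ := fun u => K * (∫ s in a..u, v s) + ∫ s in a..u, g s
  have hy : ∀ t ∈ Icc a b, HasDerivWithinAt y (K * v t + g t) (Icc a b) t := fun t ht =>
    ((hasDerivWithinAt_integral_of_continuousOn_Icc hv ht).const_mul K).add
      (hasDerivWithinAt_integral_of_continuousOn_Icc hg ht)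
  refine le_gronwallBound_of_liminf_deriv_right_le (fun t ht => (hy t ht).continuousWithinAt)
    (fun t ht _ hr => ((hy t (Ico_subset_Icc_self ht)).mono_of_mem_nhdsWithin
      (Icc_mem_nhdsGE_of_mem ht)).liminf_right_slope_le hr) (by simp [y]) (fun t ht => ?_)
    b (right_mem_Icc.2 hab)
  have ht' := Ico_subset_Icc_self ht
  simp only [y]
  linarith [mul_le_mul_of_nonneg_left (hvg t ht') hK, hgv t ht']

theorem norm_sub_le_integral_norm_of_hasDerivWithinAt {X V : ℝ → F} {a b : ℝ} (hab : a ≤ b)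
    (hX : ∀ t ∈ Icc a b, HasDerivWithinAt X (V t) (Icc a b) t) (hV : ContinuousOn V (Icc a b)) :
    ‖X b - X a‖ ≤ ∫ s in a..b, ‖V s‖ := by
  rw [← integral_eq_sub_of_hasDeriv_right_of_le hab (fun t ht => (hX t ht).continuousWithinAt)
    (fun t ht => ((hX t (Ioo_subset_Icc_self ht)).hasDerivAt
      (Icc_mem_nhds ht.1 ht.2)).hasDerivWithinAt) (hV.intervalIntegrable_of_Icc hab)]
  exact norm_integral_le_integral_norm hab

theorem norm_le_integral_norm_of_hasDerivWithinAt_damped {k : ℝ → ℝ} {V G : ℝ → F}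
    (hk : Continuous k) (hk0 : ∀ t, 0 ≤ k t) (hG : ContinuousOn G (Ici 0)) (hV0 : V 0 = 0)
    (hV : ∀ t ∈ Ici (0:ℝ), HasDerivWithinAt V (-k t • V t - G t) (Ici 0) t) {t : ℝ}
    (ht : 0 ≤ t) : ‖V t‖ ≤ ∫ s in 0..t, ‖G s‖ := by
  set m : ℝ → ℝ := fun u => Real.exp (∫ s in 0..u, k s)
  have hm : ∀ u, HasDerivAt m (k u * m u) u := fun u => by
    simpa [m, mul_comm] using (hk.integral_hasStrictDerivAt 0 u).hasDerivAt.exp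
  have hm_pos : ∀ u, 0 < m u := fun u => Real.exp_pos _
  have hm_mono : Monotone m :=
    monotone_of_deriv_nonneg (fun u => (hm u).differentiableAt) fun u => by
      rw [(hm u).deriv]; exact mul_nonneg (hk0 u) (hm_pos u).le
  have hm_cont : Continuous m := continuous_iff_continuousAt.2 fun u => (hm u).continuousAt
  have hGt : ContinuousOn G (Icc 0 t) := hG.mono Icc_subset_Ici_self
  have hmV : ∀ u ∈ Icc 0 t,
      HasDerivWithinAt (fun u => m u • V u) (-(m u • G u)) (Icc 0 t) u := fun u hu =>
    ((hm u).hasDerivWithinAt.smul ((hV u hu.1).mono Icc_subset_Ici_self)).congr_deriv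
      (by module)
  have h := norm_sub_le_integral_norm_of_hasDerivWithinAt ht hmV (hm_cont.continuousOn.smul hGt).neg
  simp only [hV0, smul_zero, sub_zero, norm_neg, norm_smul, Real.norm_of_nonneg (hm_pos _).le] at h
  have hmono : ∫ s in 0..t, m s * ‖G s‖ ≤ m t * ∫ s in 0..t, ‖G s‖ := by
    rw [← integral_const_mul]
    exact integral_mono_on ht ((hm_cont.continuousOn.mul hGt.norm).intervalIntegrable_of_Icc ht)
      ((continuousOn_const.mul hGt.norm).intervalIntegrable_of_Icc ht)
      fun s hs => mul_le_mul_of_nonneg_right (hm_mono hs.2) (norm_nonneg _)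
  exact le_of_mul_le_mul_left (h.trans hmono) (hm_pos t)

theorem mul_norm_sub_add_norm_le_gronwallBound_of_damped {k : ℝ → ℝ} {Φ : F → F} {K : ℝ}
    {X V : ℝ → F} (hk : Continuous k) (hk0 : ∀ t, 0 ≤ k t) (hK : 0 ≤ K)
    (hΦ : ∀ x y, ‖Φ x - Φ y‖ ≤ K ^ 2 * ‖x - y‖) (hV0 : V 0 = 0)
    (hX : ∀ t ∈ Ici (0:ℝ), HasDerivWithinAt X (V t) (Ici 0) t)
    (hV : ∀ t ∈ Ici (0:ℝ), HasDerivWithinAt V (-k t • V t - Φ (X t)) (Ici 0) t) {T : ℝ}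
    (hT : 0 ≤ T) : K * ‖X T - X 0‖ + ‖V T‖ ≤ gronwallBound 0 K ‖Φ (X 0)‖ T := by
  have hXc : ContinuousOn X (Ici 0) := fun t ht => (hX t ht).continuousWithinAt
  have hVc : ContinuousOn V (Ici 0) := fun t ht => (hV t ht).continuousWithinAt
  have hΦc : Continuous Φ :=
    (LipschitzWith.of_dist_le' fun x y => by simpa only [dist_eq_norm] using hΦ x y).continuous
  have hGc : ContinuousOn (fun t => Φ (X t)) (Ici 0) := hΦc.comp_continuousOn hXc
  have hXsub : ∀ t ∈ Icc 0 T, ‖X t - X 0‖ ≤ ∫ s in 0..t, ‖V s‖ := fun t ht =>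
    norm_sub_le_integral_norm_of_hasDerivWithinAt ht.1
      (fun u hu => (hX u hu.1).mono Icc_subset_Ici_self)
      (hVc.mono Icc_subset_Ici_self)
  have hVle : ∀ t ∈ Icc 0 T, ‖V t‖ ≤ ∫ s in 0..t, ‖Φ (X s)‖ := fun t ht =>
    norm_le_integral_norm_of_hasDerivWithinAt_damped hk hk0 hGc hV0 hV ht.1
  have hΦle : ∀ t ∈ Icc 0 T, ‖Φ (X t)‖ ≤ ‖Φ (X 0)‖ + K ^ 2 * ∫ s in 0..t, ‖V s‖ := fun t ht =>
    calc ‖Φ (X t)‖ ≤ ‖Φ (X 0)‖ + ‖Φ (X t) - Φ (X 0)‖ := norm_le_insert' _ _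
      _ ≤ ‖Φ (X 0)‖ + K ^ 2 * ∫ s in 0..t, ‖V s‖ := by
        gcongr; exact (hΦ _ _).trans (by gcongr; exact hXsub t ht)
  have hgron := mul_integral_add_integral_le_gronwallBound hK hT
    (hVc.mono Icc_subset_Ici_self).norm (hGc.mono Icc_subset_Ici_self).norm hVle hΦle
  rw [sub_zero] at hgron
  refine le_trans ?_ hgron
  gcongr
  · exact hXsub T (right_mem_Icc.2 hT)
  · exact hVle T (right_mem_Icc.2 hT)

end

theorem exp_sqrt_six_le : Real.exp (√6) ≤ 13 := by
  have h6 : √6 ≤ 5 / 2 := Real.sqrt_le_iff.2 ⟨by norm_num, by norm_num⟩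
  have hsq : Real.exp (5 / 2) ^ 2 < 13 ^ 2 := by
    rw [← Real.exp_nat_mul, show ((2 : ℕ) : ℝ) * (5 / 2) = (5 : ℕ) * 1 by norm_num,
      Real.exp_nat_mul]
    calc Real.exp 1 ^ 5 < 2.7182818286 ^ 5 := by gcongr; exact Real.exp_one_lt_d9
      _ < 13 ^ 2 := by norm_num
  exact (Real.exp_le_exp.2 h6).trans (pow_lt_pow_iff_left₀ (Real.exp_pos _).le (by norm_num)
    two_ne_zero |>.1 hsq).le

theorem gronwallBound_zero_le_of_mul_le_sqrt_six {K c t : ℝ} (hK : 0 < K) (hc : 0 ≤ c)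
    (hKt : K * t ≤ √6) : gronwallBound 0 K c t ≤ 12 * c / K := by
  have hexp : Real.exp (K * t) - 1 ≤ 12 := by
    linarith [(Real.exp_le_exp.2 hKt).trans exp_sqrt_six_le]
  simp only [gronwallBound_of_K_ne_0 hK.ne', zero_mul, zero_add]
  calc c / K * (Real.exp (K * t) - 1) ≤ c / K * 12 := by gcongr
    _ = 12 * c / K := by ring

theorem twelve_mul_div_sqrt_le_five_mul_sqrt_six_div {L c : ℝ} (hc : 0 ≤ c) :
    12 * c / √L ≤ 5 * √(6 / L) * c := by
  have h12 : 12 ≤ 5 * √6 := by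
    nlinarith [Real.sq_sqrt (show (0 : ℝ) ≤ 6 by norm_num), Real.sqrt_nonneg 6]
  calc 12 * c / √L ≤ 5 * √6 * c / √L := by gcongr
    _ = 5 * √(6 / L) * c := by rw [Real.sqrt_div (by norm_num : (0 : ℝ) ≤ 6)]; ring

theorem SmoothedSol.sqrt_mul_norm_sub_add_norm_le {n : ℕ} {L : ℝ} (hL : 0 < L) {f : E n → ℝ}
    (hf : ∀ x y, ‖gradient f x - gradient f y‖ ≤ L * ‖x - y‖) {δ : ℝ} (hδ : 0 < δ) {x0 : E n}
    {X V : ℝ → E n} (hs : SmoothedSol n f δ x0 X V) {t : ℝ} (ht : 0 ≤ t)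
    (htL : t ≤ √(6 / L)) :
    √L * ‖X t - x0‖ + ‖V t‖ ≤ 12 * ‖gradient f x0‖ / √L := by
  obtain ⟨rfl, hV0, hX, hV⟩ := hs
  have hmax : ∀ t, 0 < max δ t := fun t => hδ.trans_le (le_max_left _ _)
  have hk : Continuous fun t => 3 / max δ t :=
    continuous_const.div (continuous_const.max continuous_id) fun t => (hmax t).ne'
  have hf' : ∀ x y, ‖gradient f x - gradient f y‖ ≤ √L ^ 2 * ‖x - y‖ := by
    rwa [Real.sq_sqrt hL.le]
  refine (mul_norm_sub_add_norm_le_gronwallBound_of_damped hk (fun t => (div_pos three_pos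
    (hmax t)).le) (Real.sqrt_nonneg L) hf' hV0 hX hV ht).trans
    (gronwallBound_zero_le_of_mul_le_sqrt_six (Real.sqrt_pos.2 hL) (norm_nonneg _) ?_)
  calc √L * t ≤ √L * √(6 / L) := by gcongr
    _ = √6 := by rw [← Real.sqrt_mul hL.le]; field_simp

/-- **Lemma (uniform boundedness and equicontinuity).** For `f ∈ F_L` and
`δ ∈ (0, √(3/L)]`, the smoothed-ODE solutions satisfy, on `[0, √(6/L)]`, the uniform bounds
`‖Ẋ_δ(t)‖ ≤ 5√(6/L)‖∇f(x₀)‖` and `‖X_δ(t)‖ ≤ ‖x₀‖ + 30‖∇f(x₀)‖/L`; in particular the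
family `{X_δ}` is uniformly bounded and equicontinuous on `[0, √(6/L)]`. -/
theorem smoothed_family_bounded_equicontinuous (n : ℕ) (L : ℝ) (hL : 0 < L)
    (f : E n → ℝ) (hf : MemFL n L f) (x0 : E n) :
    (∀ δ : ℝ, 0 < δ → δ ≤ Real.sqrt (3 / L) →
      ∀ X V : ℝ → E n, SmoothedSol n f δ x0 X V →
        ∀ t : ℝ, 0 ≤ t → t ≤ Real.sqrt (6 / L) →
          ‖V t‖ ≤ 5 * Real.sqrt (6 / L) * ‖gradient f x0‖ ∧
          ‖X t‖ ≤ ‖x0‖ + 30 * ‖gradient f x0‖ / L) ∧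
    ∀ ε > (0:ℝ), ∃ η > (0:ℝ), ∀ δ : ℝ, 0 < δ → δ ≤ Real.sqrt (3 / L) →
      ∀ X V : ℝ → E n, SmoothedSol n f δ x0 X V →
        ∀ s t : ℝ, s ∈ Set.Icc (0:ℝ) (Real.sqrt (6 / L)) →
          t ∈ Set.Icc (0:ℝ) (Real.sqrt (6 / L)) → |s - t| < η →
            ‖X s - X t‖ ≤ ε := by
  set g0 := ‖gradient f x0‖
  set B := 5 * √(6 / L) * g0
  have hsL : 0 < √L := Real.sqrt_pos.2 hL
  have hB : 12 * g0 / √L ≤ B := twelve_mul_div_sqrt_le_five_mul_sqrt_six_div (norm_nonneg _)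
  have hvel : ∀ δ, 0 < δ → ∀ X V, SmoothedSol n f δ x0 X V →
      ∀ t ∈ Icc 0 (√(6 / L)), ‖V t‖ ≤ B := fun δ hδ X V hs t ht => by
    linarith [hs.sqrt_mul_norm_sub_add_norm_le hL hf.2.2 hδ ht.1 ht.2,
      mul_nonneg hsL.le (norm_nonneg (X t - x0))]
  refine ⟨fun δ hδ _ X V hs t ht htL => ⟨hvel δ hδ X V hs t ⟨ht, htL⟩, ?_⟩, fun ε hε => ?_⟩
  · have hX : ‖X t - x0‖ ≤ 12 * g0 / L := by
      rw [← Real.mul_self_sqrt hL.le, ← div_div, le_div_iff₀' hsL]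
      linarith [hs.sqrt_mul_norm_sub_add_norm_le hL hf.2.2 hδ ht htL, norm_nonneg (V t)]
    calc ‖X t‖ ≤ ‖x0‖ + ‖X t - x0‖ := norm_le_insert' _ _
      _ ≤ ‖x0‖ + 30 * g0 / L := by gcongr; exact hX.trans (by gcongr; norm_num)
  · refine ⟨ε / (B + 1), by positivity, fun δ hδ _ X V hs s t hs' ht' hst => ?_⟩
    calc ‖X s - X t‖ ≤ B * ‖s - t‖ :=
          Convex.norm_image_sub_le_of_norm_hasDerivWithin_le
            (fun u hu => (hs.2.2.1 u hu.1).mono Icc_subset_Ici_self) (hvel δ hδ X V hs)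
            (convex_Icc _ _) ht' hs'
      _ ≤ (B + 1) * (ε / (B + 1)) := by rw [Real.norm_eq_abs]; gcongr; linarith
      _ = ε := mul_div_cancel₀ ε (by positivity)
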